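/- With the Markov chain of the previous construction started at x = (1, 0^n), for every t ≥ 1, d_tv(P^t(x,·), π) = (1/2)((m−2)/m)^{t−1} d_tv(μ₁, μ₂). -/

import Mathlib

/-!
After one step `X` is uniform and stays so, and the law of `Y` evolves by the affine map
`ν ↦ (μ₁ + μ₂ + (m - 2) ν) / m`. Its fixed point is `(μ₁ + μ₂) / 2`, the deviation from it is
multiplied by `(m - 2) / m` at each step, and it starts from `μ₁ - (μ₁ + μ₂) / 2 = (μ₁ - μ₂) / 2`.
Since both `P^t(x, ·)` and `π` are uniform in `X`, their total variation distance is that of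
their `Y`-marginals.
-/

open Finset

/-- The Markov chain on `[m] × {0,1}^n`: from `(X,Y)`, resample `Y ~ μ₁` if `X = 1`
(index `0`), `Y ~ μ₂` if `X = 2` (index `1`), keep `Y` otherwise; then `X` uniform. -/
noncomputable def mixChain (m n : ℕ) (μ₁ μ₂ : (Fin n → Bool) → ℝ) :
    Matrix (Fin m × (Fin n → Bool)) (Fin m × (Fin n → Bool)) ℝ :=
  Matrix.of fun s s' =>
    (1 / (m : ℝ)) *
      (if (s.1 : ℕ) = 0 then μ₁ s'.2
       else if (s.1 : ℕ) = 1 then μ₂ s'.2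
       else if s'.2 = s.2 then 1 else 0)

lemma Fin.sum_ite_val_eq_zero_one {m : ℕ} (hm : 2 ≤ m) (A B C : ℝ) :
    ∑ z : Fin m, (if (z : ℕ) = 0 then A else if (z : ℕ) = 1 then B else C) =
      A + B + ((m : ℝ) - 2) * C := by
  obtain ⟨k, rfl⟩ : ∃ k, m = k + 2 := ⟨m - 2, by omega⟩
  simp only [Fin.val_eq_zero_iff, Fin.sum_univ_succ, ↓reduceIte, Fin.succ_ne_zero, Fin.val_succ,
    Nat.add_eq_right, sum_const, nsmul_eq_mul, Nat.cast_add, Nat.cast_ofNat, add_sub_cancel_right]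
  ring

namespace MixChain

variable {m n : ℕ} {μ₁ μ₂ : (Fin n → Bool) → ℝ}

noncomputable def uniformLift (m : ℕ) (ν : (Fin n → Bool) → ℝ) (s : Fin m × (Fin n → Bool)) : ℝ :=
  (1 / (m : ℝ)) * ν s.2

lemma sum_abs_uniformLift_sub (hm : m ≠ 0) (ν ν' : (Fin n → Bool) → ℝ) :
    ∑ s, |uniformLift m ν s - uniformLift m ν' s| = ∑ y, |ν y - ν' y| := by
  simp only [uniformLift, ← mul_sub, abs_mul, Fintype.sum_prod_type, ← mul_sum, sum_const,
    card_univ, Fintype.card_fin, nsmul_eq_mul]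
  have hm' : (m : ℝ) ≠ 0 := Nat.cast_ne_zero.mpr hm
  rw [abs_of_nonneg (by positivity)]
  field_simp

lemma sum_mixChain_fiber (ν : (Fin n → Bool) → ℝ) (hν : ∑ y, ν y = 1) (z : Fin m)
    (s : Fin m × (Fin n → Bool)) :
    ∑ y, uniformLift m ν (z, y) * mixChain m n μ₁ μ₂ (z, y) s =
      (1 / (m : ℝ)) * (1 / (m : ℝ)) *
        (if (z : ℕ) = 0 then μ₁ s.2 else if (z : ℕ) = 1 then μ₂ s.2 else ν s.2) := by
  simp only [uniformLift, mixChain, Matrix.of_apply]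
  split_ifs
  · rw [← sum_mul, ← mul_sum, hν]; ring
  · rw [← sum_mul, ← mul_sum, hν]; ring
  · simp only [mul_ite, mul_one, mul_zero, sum_ite_eq, mem_univ, if_true]
    ring

lemma sum_uniformLift_mul_mixChain (hm : 2 ≤ m) (ν : (Fin n → Bool) → ℝ)
    (hν : ∑ y, ν y = 1) (s : Fin m × (Fin n → Bool)) :
    ∑ k, uniformLift m ν k * mixChain m n μ₁ μ₂ k s =
      uniformLift m (fun y => (1 / (m : ℝ)) * (μ₁ y + μ₂ y + ((m : ℝ) - 2) * ν y)) s := by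
  rw [Fintype.sum_prod_type]
  simp_rw [sum_mixChain_fiber ν hν]
  rw [← mul_sum, Fin.sum_ite_val_eq_zero_one hm]
  simp only [uniformLift]
  ring

lemma sum_average_add_mul_half_sub (hμ₁ : ∑ y, μ₁ y = 1) (hμ₂ : ∑ y, μ₂ y = 1) (c : ℝ) :
    ∑ y, ((1 / 2) * μ₁ y + (1 / 2) * μ₂ y + c * ((1 / 2) * (μ₁ y - μ₂ y))) = 1 := by
  simp only [sum_add_distrib, ← mul_sum, sum_sub_distrib, hμ₁, hμ₂]
  ring

lemma mixChain_pow_succ_apply (hm : 2 ≤ m) (hμ₁ : ∑ y, μ₁ y = 1) (hμ₂ : ∑ y, μ₂ y = 1)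
    (x : Fin m × (Fin n → Bool)) (hx : (x.1 : ℕ) = 0) (k : ℕ) (s : Fin m × (Fin n → Bool)) :
    (mixChain m n μ₁ μ₂ ^ (k + 1)) x s =
      uniformLift m (fun y => (1 / 2) * μ₁ y + (1 / 2) * μ₂ y +
        (((m : ℝ) - 2) / m) ^ k * ((1 / 2) * (μ₁ y - μ₂ y))) s := by
  induction k generalizing s with
  | zero =>
    rw [zero_add, pow_one]
    simp only [mixChain, Matrix.of_apply, hx, if_true, uniformLift]
    ring
  | succ k ih =>
    rw [pow_succ, Matrix.mul_apply]
    simp_rw [ih]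
    rw [sum_uniformLift_mul_mixChain hm _ (sum_average_add_mul_half_sub hμ₁ hμ₂ _)]
    have hm' : (m : ℝ) ≠ 0 := by positivity
    simp only [uniformLift, pow_succ]
    generalize (((m : ℝ) - 2) / m) ^ k = c
    field_simp
    ring

end MixChain

/-- Started at `x = (1, 0ⁿ)`, for every `t ≥ 1`,
`d_tv(P^t(x,·), π) = (1/2)((m−2)/m)^{t−1} d_tv(μ₁, μ₂)`. -/
theorem stmt_8 (m n : ℕ) (hm : 3 ≤ m) (μ₁ μ₂ : (Fin n → Bool) → ℝ)
    (hμ₁1 : ∑ y, μ₁ y = 1) (hμ₂1 : ∑ y, μ₂ y = 1)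
    (t : ℕ) (ht : 1 ≤ t) :
    (1/2) * ∑ s : Fin m × (Fin n → Bool),
        |(mixChain m n μ₁ μ₂ ^ t) (⟨0, by omega⟩, fun _ => false) s -
          (1 / (m : ℝ)) * ((1/2) * μ₁ s.2 + (1/2) * μ₂ s.2)|
      = (1/2) * (((m : ℝ) - 2) / m)^(t-1) * ((1/2) * ∑ y, |μ₁ y - μ₂ y|) := by
  obtain ⟨k, rfl⟩ : ∃ k, t = k + 1 := ⟨t - 1, by omega⟩
  have hρ : 0 ≤ ((m : ℝ) - 2) / m := div_nonneg (by norm_num; omega) (Nat.cast_nonneg m)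
  rw [sum_congr rfl fun s _ => by
    rw [MixChain.mixChain_pow_succ_apply (m := m) (by omega) hμ₁1 hμ₂1 _ rfl k s]]
  change (1 / 2) * ∑ s, |MixChain.uniformLift m _ s -
    MixChain.uniformLift m (fun y => (1 / 2) * μ₁ y + (1 / 2) * μ₂ y) s| = _
  rw [MixChain.sum_abs_uniformLift_sub (by omega)]
  simp only [add_sub_cancel_left, abs_mul, abs_of_nonneg (pow_nonneg hρ k),
    abs_of_pos (one_half_pos (α := ℝ)), ← mul_sum, Nat.add_sub_cancel]
  ring
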